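/- arXiv:1403.3995 — 2 statements merged into one kernel-verified Lean document; each statement's English description precedes it below -/
import Mathlib

section
/- Let a, b, c, d ∈ ℝ, ρ : ℝ → ℝ differentiable, and x₁, x₂, x₃ : ℝ → ℝ differentiable with x₁' = a x₂ + x₃, x₂' = b x₁ + c x₃, x₃' = ρ ∘ x₁ + d x₂. Then x₁ is three times differentiable and x₁''' = (ρ'(x₁) + ab + cd) x₁' + a c ρ(x₁) + b d x₁. -/
/-! Differentiate `x₁' = a x₂ + x₃` twice, substituting the system after each step. In the
third derivative the remaining `x₂`, `x₃` terms are `a c d x₂ + c d x₃ = c d x₁'`, which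
eliminates them. -/

section ThirdOrderReduction

variable {a b c d : ℝ} {ρ x₁ x₂ x₃ : ℝ → ℝ}

theorem hasDerivAt_deriv_of_system (hx₂ : Differentiable ℝ x₂) (hx₃ : Differentiable ℝ x₃)
    (h1 : ∀ t, deriv x₁ t = a * x₂ t + x₃ t) (h2 : ∀ t, deriv x₂ t = b * x₁ t + c * x₃ t)
    (h3 : ∀ t, deriv x₃ t = ρ (x₁ t) + d * x₂ t) (t : ℝ) :
    HasDerivAt (deriv x₁) (a * (b * x₁ t + c * x₃ t) + (ρ (x₁ t) + d * x₂ t)) t := by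
  rw [funext h1, ← h2, ← h3]
  exact ((hx₂ t).hasDerivAt.const_mul a).add (hx₃ t).hasDerivAt

theorem deriv_deriv_of_system (hx₂ : Differentiable ℝ x₂) (hx₃ : Differentiable ℝ x₃)
    (h1 : ∀ t, deriv x₁ t = a * x₂ t + x₃ t) (h2 : ∀ t, deriv x₂ t = b * x₁ t + c * x₃ t)
    (h3 : ∀ t, deriv x₃ t = ρ (x₁ t) + d * x₂ t) :
    deriv (deriv x₁) = fun t => a * (b * x₁ t + c * x₃ t) + (ρ (x₁ t) + d * x₂ t) :=
  funext fun t => (hasDerivAt_deriv_of_system hx₂ hx₃ h1 h2 h3 t).deriv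

theorem hasDerivAt_deriv_deriv_of_system (hρ : Differentiable ℝ ρ) (hx₁ : Differentiable ℝ x₁)
    (hx₂ : Differentiable ℝ x₂) (hx₃ : Differentiable ℝ x₃)
    (h1 : ∀ t, deriv x₁ t = a * x₂ t + x₃ t) (h2 : ∀ t, deriv x₂ t = b * x₁ t + c * x₃ t)
    (h3 : ∀ t, deriv x₃ t = ρ (x₁ t) + d * x₂ t) (t : ℝ) :
    HasDerivAt (deriv (deriv x₁))
      ((deriv ρ (x₁ t) + a * b + c * d) * deriv x₁ t + a * c * ρ (x₁ t) + b * d * x₁ t) t := by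
  have hρx₁ : HasDerivAt (fun s => ρ (x₁ s)) (deriv ρ (x₁ t) * deriv x₁ t) t :=
    (hρ (x₁ t)).hasDerivAt.comp t (hx₁ t).hasDerivAt
  have second : HasDerivAt (fun s => a * (b * x₁ s + c * x₃ s) + (ρ (x₁ s) + d * x₂ s))
      (a * (b * deriv x₁ t + c * deriv x₃ t) + (deriv ρ (x₁ t) * deriv x₁ t + d * deriv x₂ t)) t :=
    ((((hx₁ t).hasDerivAt.const_mul b).add ((hx₃ t).hasDerivAt.const_mul c)).const_mul a).add
      (hρx₁.add ((hx₂ t).hasDerivAt.const_mul d))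
  rw [deriv_deriv_of_system hx₂ hx₃ h1 h2 h3]
  convert second using 1
  rw [h1, h2, h3]
  ring

end ThirdOrderReduction

theorem stmt_15 (a b c d : ℝ) (ρ : ℝ → ℝ) (hρ : Differentiable ℝ ρ)
    (x₁ x₂ x₃ : ℝ → ℝ)
    (hx₁ : Differentiable ℝ x₁) (hx₂ : Differentiable ℝ x₂) (hx₃ : Differentiable ℝ x₃)
    (h1 : ∀ t, deriv x₁ t = a * x₂ t + x₃ t)
    (h2 : ∀ t, deriv x₂ t = b * x₁ t + c * x₃ t)
    (h3 : ∀ t, deriv x₃ t = ρ (x₁ t) + d * x₂ t) :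
    Differentiable ℝ (deriv x₁) ∧ Differentiable ℝ (deriv (deriv x₁)) ∧
      ∀ t, deriv (deriv (deriv x₁)) t =
        (deriv ρ (x₁ t) + a * b + c * d) * deriv x₁ t +
          a * c * ρ (x₁ t) + b * d * x₁ t := by
  have third := hasDerivAt_deriv_deriv_of_system hρ hx₁ hx₂ hx₃ h1 h2 h3
  exact ⟨fun t => (hasDerivAt_deriv_of_system hx₂ hx₃ h1 h2 h3 t).differentiableAt,
    fun t => (third t).differentiableAt, fun t => (third t).deriv⟩
end

section
/- Let a, b ∈ ℝ with a ≠ 0. If (x_n, y_n) solves the rational system x_{n+1} = x_n/y_n, y_{n+1} = x_n/(a x_n + b y_n), with y_n ≠ 0 and a x_n + b y_n ≠ 0 for all n, then x_{n+2} = a x_{n+1} + b for all n, and y_n = x_n / x_{n+1} whenever x_{n+1} ≠ 0. -/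
/-!
Substituting the second equation into the first, `x (n + 2) = x (n + 1) / y (n + 1)` becomes
`(x n / y n) / (x n / (a * x n + b * y n)) = (a * x n + b * y n) / y n = a * x (n + 1) + b`,
so `x n` cancels and the system collapses to an affine recurrence. The cancellation is legitimate
because `y (n + 1) ≠ 0` already forces `x n ≠ 0` and `a * x n + b * y n ≠ 0`.
-/

section

variable {K : Type*} [Field K] {a b : K} {x y : ℕ → K} {n : ℕ}

theorem x_add_two_eq_of_rational_system (hx : ∀ n, x (n + 1) = x n / y n)
    (hy : ∀ n, y (n + 1) = x n / (a * x n + b * y n)) (hyn : y n ≠ 0) (hyn' : y (n + 1) ≠ 0) :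
    x (n + 2) = a * x (n + 1) + b := by
  obtain ⟨hxn, hden⟩ : x n ≠ 0 ∧ a * x n + b * y n ≠ 0 :=
    div_ne_zero_iff.mp (hy n ▸ hyn')
  calc x (n + 2) = x n / y n / (x n / (a * x n + b * y n)) := by rw [hx (n + 1), hx n, hy n]
    _ = (a * x n + b * y n) / y n := by field_simp
    _ = a * x (n + 1) + b := by rw [hx n]; field_simp

theorem y_eq_div_of_rational_system (hx : ∀ n, x (n + 1) = x n / y n) (hxn' : x (n + 1) ≠ 0) :
    y n = x n / x (n + 1) := by
  rw [hx n] at hxn' ⊢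
  exact (div_div_cancel₀ (div_ne_zero_iff.mp hxn').1).symm

end

theorem stmt_18_general (a b : ℝ) (x y : ℕ → ℝ)
    (hy0 : ∀ n, y n ≠ 0)
    (hx : ∀ n, x (n + 1) = x n / y n)
    (hy : ∀ n, y (n + 1) = x n / (a * x n + b * y n)) :
    (∀ n, x (n + 2) = a * x (n + 1) + b) ∧
      (∀ n, x (n + 1) ≠ 0 → y n = x n / x (n + 1)) :=
  ⟨fun n => x_add_two_eq_of_rational_system hx hy (hy0 n) (hy0 (n + 1)),
    fun _ hxn' => y_eq_div_of_rational_system hx hxn'⟩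

theorem stmt_18 (a b : ℝ) (ha : a ≠ 0) (x y : ℕ → ℝ)
    (hy0 : ∀ n, y n ≠ 0) (hden : ∀ n, a * x n + b * y n ≠ 0)
    (hx : ∀ n, x (n + 1) = x n / y n)
    (hy : ∀ n, y (n + 1) = x n / (a * x n + b * y n)) :
    (∀ n, x (n + 2) = a * x (n + 1) + b) ∧
      (∀ n, x (n + 1) ≠ 0 → y n = x n / x (n + 1)) :=
  stmt_18_general a b x y hy0 hx hy
end
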